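/- If every left R-module is Gorenstein flat (i.e., the left weak Gorenstein global dimension of R is 0), then every right injective R-module is flat and every left injective R-module is flat; i.e., R is an IF ring. -/

import Mathlib

open TensorProduct

universe u

section NCTensor
variable (R : Type u) [Ring R]

/-- Generators of the defect submodule used to define the tensor product of a right
`R`-module `N` and a left `R`-module `M` over a (possibly noncommutative) ring `R`. -/
def NCRel (N M : Type u) [AddCommGroup N] [Module Rᵐᵒᵖ N] [AddCommGroup M] [Module R M] :
    Submodule ℤ (N ⊗[ℤ] M) :=
  Submodule.span ℤ { t | ∃ (n : N) (r : R) (m : M),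
    t = (MulOpposite.op r • n) ⊗ₜ[ℤ] m - n ⊗ₜ[ℤ] (r • m) }

/-- The tensor product `N ⊗_R M` of a right `R`-module and a left `R`-module, as an
abelian group. -/
def NCTensor (N M : Type u) [AddCommGroup N] [Module Rᵐᵒᵖ N] [AddCommGroup M] [Module R M] :
    Type u :=
  (N ⊗[ℤ] M) ⧸ NCRel R N M

noncomputable instance (N M : Type u) [AddCommGroup N] [Module Rᵐᵒᵖ N] [AddCommGroup M] [Module R M] :
    AddCommGroup (NCTensor R N M) :=
  inferInstanceAs (AddCommGroup ((N ⊗[ℤ] M) ⧸ NCRel R N M))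

noncomputable instance (N M : Type u) [AddCommGroup N] [Module Rᵐᵒᵖ N] [AddCommGroup M] [Module R M] :
    Module ℤ (NCTensor R N M) :=
  inferInstanceAs (Module ℤ ((N ⊗[ℤ] M) ⧸ NCRel R N M))

/-- The map `I ⊗_R M → I ⊗_R M'` induced by a map `M →ₗ[R] M'` of left modules. -/
noncomputable def NCmap (N : Type u) [AddCommGroup N] [Module Rᵐᵒᵖ N] {M M' : Type u} [AddCommGroup M]
    [Module R M] [AddCommGroup M'] [Module R M'] (f : M →ₗ[R] M') :
    NCTensor R N M →ₗ[ℤ] NCTensor R N M' :=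
  Submodule.mapQ _ _ (LinearMap.lTensor N (f.restrictScalars ℤ)) <| by
    rw [NCRel, Submodule.span_le]
    rintro t ⟨n, r, m, rfl⟩
    refine Submodule.mem_comap.mpr (Submodule.subset_span ?_)
    refine ⟨n, r, f m, ?_⟩
    exact (map_sub (LinearMap.lTensor N (f.restrictScalars ℤ)) _ _).trans (by simp [LinearMap.lTensor_tmul, map_sub, LinearMap.map_smul])

/-- The map `N ⊗_R M → N' ⊗_R M` induced by a map `N →ₗ[Rᵐᵒᵖ] N'` of right modules. -/
noncomputable def NCmapL (R : Type u) [Ring R] {N N' : Type u} [AddCommGroup N]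
    [Module Rᵐᵒᵖ N] [AddCommGroup N'] [Module Rᵐᵒᵖ N'] (M : Type u) [AddCommGroup M]
    [Module R M] (f : N →ₗ[Rᵐᵒᵖ] N') :
    NCTensor R N M →ₗ[ℤ] NCTensor R N' M :=
  Submodule.mapQ _ _ (LinearMap.rTensor M f.toAddMonoidHom.toIntLinearMap) <| by
    rw [NCRel, Submodule.span_le]
    rintro t ⟨n, r, m, rfl⟩
    refine Submodule.mem_comap.mpr (Submodule.subset_span ?_)
    refine ⟨f n, r, m, ?_⟩
    exact (map_sub (LinearMap.rTensor M f.toAddMonoidHom.toIntLinearMap) _ _).trans (by simp [LinearMap.rTensor_tmul, map_sub, LinearMap.map_smul])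

/-- A left `R`-module `M` (over a possibly noncommutative ring) is flat if tensoring with
`M` preserves injectivity of maps of right `R`-modules. -/
def FlatModule (R : Type u) [Ring R] (M : Type u) [AddCommGroup M] [Module R M] : Prop :=
  ∀ (N N' : Type u) [AddCommGroup N] [Module Rᵐᵒᵖ N] [AddCommGroup N'] [Module Rᵐᵒᵖ N']
    (f : N →ₗ[Rᵐᵒᵖ] N'), Function.Injective f → Function.Injective (NCmapL R M f)

end NCTensor
section GDefs
variable (R : Type u) [Ring R]

/-- A complete flat resolution witnessing that `M` is a Gorenstein flat left `R`-module:
an exact sequence `⋯ → F₂ → F₁ → F₀ → F₋₁ → ⋯` of flat left `R`-modules with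
`M ≅ Im(F₀ → F₋₁)` which stays exact after applying `I ⊗_R -` for every injective right
`R`-module `I`. -/
structure CompleteFlatResolution (M : Type u) [AddCommGroup M] [Module R M] :
    Type (u + 1) where
  F : ℤ → ModuleCat.{u} R
  d : ∀ z : ℤ, F (z + 1) →ₗ[R] F z
  flat : ∀ z, FlatModule R (F z)
  exact : ∀ z, Function.Exact (d (z + 1)) (d z)
  iso : Nonempty (M ≃ₗ[R] LinearMap.range (d (-1)))
  tensorExact : ∀ (I : Type u) [AddCommGroup I] [Module Rᵐᵒᵖ I], Module.Injective Rᵐᵒᵖ I →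
    ∀ z, Function.Exact (NCmap R I (d (z + 1))) (NCmap R I (d z))

/-- A left `R`-module is Gorenstein flat if it admits a complete flat resolution. -/
def IsGorensteinFlat (M : Type u) [AddCommGroup M] [Module R M] : Prop :=
  Nonempty (CompleteFlatResolution R M)

/-- A complete projective resolution witnessing that `M` is a Gorenstein projective left
`R`-module. -/
structure CompleteProjResolution (M : Type u) [AddCommGroup M] [Module R M] :
    Type (u + 1) where
  P : ℤ → ModuleCat.{u} R
  d : ∀ z : ℤ, P (z + 1) →ₗ[R] P z
  proj : ∀ z, Module.Projective R (P z)
  exact : ∀ z, Function.Exact (d (z + 1)) (d z)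
  iso : Nonempty (M ≃ₗ[R] LinearMap.range (d (-1)))
  homExact : ∀ (Q : Type u) [AddCommGroup Q] [Module R Q], Module.Projective R Q →
    ∀ z, Function.Exact (fun g : P z →ₗ[R] Q => g.comp (d z))
      (fun g : P (z + 1) →ₗ[R] Q => g.comp (d (z + 1)))

/-- A left `R`-module is Gorenstein projective if it admits a complete projective
resolution. -/
def IsGorensteinProjective (M : Type u) [AddCommGroup M] [Module R M] : Prop :=
  Nonempty (CompleteProjResolution R M)

/-- `gfdLE R n M` : the Gorenstein flat dimension of the left `R`-module `M` is at most
`n`, i.e. `M` has a resolution of length `n` by Gorenstein flat modules. -/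
def gfdLE : ℕ → ModuleCat.{u} R → Prop
  | 0, M => IsGorensteinFlat R M
  | n + 1, M => ∃ (G : ModuleCat.{u} R) (f : G →ₗ[R] M), Function.Surjective f ∧
      IsGorensteinFlat R G ∧ gfdLE n (ModuleCat.of R (LinearMap.ker f))

/-- `gpdLE R n M` : the Gorenstein projective dimension of `M` is at most `n`. -/
def gpdLE : ℕ → ModuleCat.{u} R → Prop
  | 0, M => IsGorensteinProjective R M
  | n + 1, M => ∃ (G : ModuleCat.{u} R) (f : G →ₗ[R] M), Function.Surjective f ∧
      IsGorensteinProjective R G ∧ gpdLE n (ModuleCat.of R (LinearMap.ker f))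

/-- `fdLE R n M` : the flat dimension of `M` is at most `n`. -/
def fdLE : ℕ → ModuleCat.{u} R → Prop
  | 0, M => FlatModule R M
  | n + 1, M => ∃ (G : ModuleCat.{u} R) (f : G →ₗ[R] M), Function.Surjective f ∧
      FlatModule R G ∧ fdLE n (ModuleCat.of R (LinearMap.ker f))

/-- `pdLE R n M` : the projective dimension of `M` is at most `n`. -/
def pdLE : ℕ → ModuleCat.{u} R → Prop
  | 0, M => Module.Projective R M
  | n + 1, M => ∃ (G : ModuleCat.{u} R) (f : G →ₗ[R] M), Function.Surjective f ∧
      Module.Projective R G ∧ pdLE n (ModuleCat.of R (LinearMap.ker f))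

/-- `idLE R n M` : the injective dimension of `M` is at most `n`. -/
def idLE : ℕ → ModuleCat.{u} R → Prop
  | 0, M => Module.Injective R M
  | n + 1, M => ∃ (I : ModuleCat.{u} R) (f : M →ₗ[R] I), Function.Injective f ∧
      Module.Injective R I ∧ idLE n (ModuleCat.of R (I ⧸ LinearMap.range f))

/-- Gorenstein flat dimension, valued in `ℕ∞`. -/
noncomputable def gfDim (M : ModuleCat.{u} R) : ℕ∞ :=
  sInf {n : ℕ∞ | ∃ k : ℕ, n = k ∧ gfdLE R k M}

/-- Flat dimension, valued in `ℕ∞`. -/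
noncomputable def flatDim (M : ModuleCat.{u} R) : ℕ∞ :=
  sInf {n : ℕ∞ | ∃ k : ℕ, n = k ∧ fdLE R k M}

/-- Injective dimension, valued in `ℕ∞`. -/
noncomputable def injDim (M : ModuleCat.{u} R) : ℕ∞ :=
  sInf {n : ℕ∞ | ∃ k : ℕ, n = k ∧ idLE R k M}

/-- The (left) weak Gorenstein global dimension of `R`:
the supremum of Gorenstein flat dimensions of all left `R`-modules. -/
noncomputable def wGgldim : ℕ∞ :=
  ⨆ M : ModuleCat.{u} R, gfDim R M

/-- `IFD R` : the supremum of flat dimensions of injective left `R`-modules. -/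
noncomputable def IFD : ℕ∞ :=
  ⨆ M : ModuleCat.{u} R, ⨆ (_ : Module.Injective R M), flatDim R M

/-- A ring is left coherent if every finitely generated left ideal is finitely
presented. -/
def LeftCoherent : Prop :=
  ∀ I : Submodule R R, I.FG → Module.FinitePresentation R I

/-- A ring is right coherent if every finitely generated right ideal is finitely
presented; right ideals are viewed as left ideals of `Rᵐᵒᵖ`. -/
def RightCoherent : Prop := LeftCoherent Rᵐᵒᵖ

end GDefs

/-- `TorVanishGT R n I M` : `Tor_i^R(I, M) = 0` for all `i > n`, expressed by saying that
for every projective resolution `P• → M` of left modules, the complex `I ⊗_R P•` obtained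
by tensoring with the right module `I` is exact at every spot of index `> n`. -/
noncomputable def TorVanishGT (R : Type u) [Ring R] (n : ℕ) (I : Type u) [AddCommGroup I]
    [Module Rᵐᵒᵖ I] (M : ModuleCat.{u} R) : Prop :=
  ∀ (P : ℕ → ModuleCat.{u} R) (d : ∀ i, P (i + 1) →ₗ[R] P i) (ε : P 0 →ₗ[R] M),
    (∀ i, Module.Projective R (P i)) → Function.Surjective ε →
    Function.Exact (d 0) ε → (∀ i, Function.Exact (d (i + 1)) (d i)) →
    ∀ j, n ≤ j → Function.Exact (NCmap R I (d (j + 1))) (NCmap R I (d j))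

/-!
An injective left module `M` embeds in the flat module `F₋₁` of a complete flat resolution of
`M`, hence is a direct summand of it and is flat.

For an injective right module `I` and an inclusion `N ⊆ N'` of left modules, the quotient
`C = N'/N` is Gorenstein flat, so it has a presentation `0 → K → F → C → 0` with `F` flat and
`I ⊗ K → I ⊗ F` injective. Passing to characters, `I ⊗ N → I ⊗ N'` is injective iff every map
`I → N⁺` lifts along `N'⁺ → N⁺`. Pulling `F → C` back along `N' → C` gives `D` with
`0 → N → D → F → 0` and `0 → K → D → N' → 0`. Since `F⁺` is injective (Lambek) the first
sequence dualizes to a split one, so a map `I → N⁺` lifts to `D⁺`; correcting the lift by a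
map `I → F⁺`, which exists because `I ⊗ K → I ⊗ F` is injective, makes it vanish on `K`, so
it comes from `N'⁺`.
-/

open MulOpposite

namespace NCTensor

variable {R : Type u} [Ring R] {N M : Type u} [AddCommGroup N] [Module Rᵐᵒᵖ N]
  [AddCommGroup M] [Module R M]

noncomputable def mk (R : Type u) [Ring R] {N M : Type u} [AddCommGroup N] [Module Rᵐᵒᵖ N]
    [AddCommGroup M] [Module R M] (n : N) (m : M) : NCTensor R N M :=
  Submodule.Quotient.mk (n ⊗ₜ[ℤ] m)

theorem mk_add_left (n n' : N) (m : M) : mk R (n + n') m = mk R n m + mk R n' m := by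
  rw [mk, TensorProduct.add_tmul]
  rfl

theorem mk_add_right (n : N) (m m' : M) : mk R n (m + m') = mk R n m + mk R n m' := by
  rw [mk, TensorProduct.tmul_add]
  rfl

theorem mk_op_smul (r : R) (n : N) (m : M) : mk R (op r • n) m = mk R n (r • m) :=
  (Submodule.Quotient.eq _).2 (Submodule.subset_span ⟨n, r, m, rfl⟩)

@[elab_as_elim]
theorem induction_on {motive : NCTensor R N M → Prop} (t : NCTensor R N M) (zero : motive 0)
    (mk : ∀ n m, motive (mk R n m)) (add : ∀ x y, motive x → motive y → motive (x + y)) :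
    motive t := by
  obtain ⟨x, rfl⟩ := Submodule.Quotient.mk_surjective _ t
  induction x using TensorProduct.induction_on with
  | zero => exact zero
  | tmul n m => exact mk n m
  | add x y hx hy => exact add _ _ hx hy

theorem addHom_ext {A : Type*} [AddCommGroup A] {χ χ' : NCTensor R N M →+ A}
    (h : ∀ n m, χ (mk R n m) = χ' (mk R n m)) : χ = χ' := by
  ext t
  induction t using induction_on with
  | zero => simp
  | mk n m => exact h n m
  | add x y hx hy => simp [hx, hy]

variable {M' M'' : Type u} [AddCommGroup M'] [Module R M'] [AddCommGroup M''] [Module R M'']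

theorem NCmap_comp (g : M' →ₗ[R] M'') (f : M →ₗ[R] M') :
    NCmap R N (g ∘ₗ f) = NCmap R N g ∘ₗ NCmap R N f :=
  LinearMap.toAddMonoidHom_injective (addHom_ext fun _ _ => rfl)

theorem NCmap_id : NCmap R N (LinearMap.id : M →ₗ[R] M) = LinearMap.id :=
  LinearMap.toAddMonoidHom_injective (addHom_ext fun _ _ => rfl)

theorem NCmap_zero : NCmap R N (0 : M →ₗ[R] M') = 0 :=
  LinearMap.toAddMonoidHom_injective (addHom_ext fun n m => by
    show Submodule.Quotient.mk (n ⊗ₜ[ℤ] (0 : M')) = 0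
    rw [TensorProduct.tmul_zero]
    rfl)

theorem NCmap_comp_NCmapL {N' : Type u} [AddCommGroup N'] [Module Rᵐᵒᵖ N']
    (f : N →ₗ[Rᵐᵒᵖ] N') (g : M →ₗ[R] M') :
    NCmap R N' g ∘ₗ NCmapL R M f = NCmapL R M' f ∘ₗ NCmap R N g :=
  LinearMap.toAddMonoidHom_injective (addHom_ext fun _ _ => rfl)

theorem NCmap_surjective {f : M →ₗ[R] M'} (hf : Function.Surjective f) :
    Function.Surjective (NCmap R N f) := by
  intro t
  induction t using induction_on with
  | zero => exact ⟨0, map_zero _⟩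
  | mk n m =>
    obtain ⟨m, rfl⟩ := hf m
    exact ⟨mk R n m, rfl⟩
  | add x y hx hy =>
    obtain ⟨a, rfl⟩ := hx
    obtain ⟨b, rfl⟩ := hy
    exact ⟨a + b, map_add _ _ _⟩

end NCTensor

section Flat

open NCTensor

variable {R : Type u} [Ring R]

theorem FlatModule.of_retract {M F : Type u} [AddCommGroup M] [Module R M] [AddCommGroup F]
    [Module R F] (hF : FlatModule R F) (i : M →ₗ[R] F) (p : F →ₗ[R] M)
    (hpi : p ∘ₗ i = LinearMap.id) : FlatModule R M := by
  intro N N' _ _ _ _ f hf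
  have hi : Function.Injective (NCmap R N i) := by
    refine Function.LeftInverse.injective (g := NCmap R N p) fun t => ?_
    rw [← LinearMap.comp_apply, ← NCmap_comp, hpi, NCmap_id, LinearMap.id_apply]
  have hcomp := (hF N N' f hf).comp hi
  rw [← LinearMap.coe_comp, ← NCmap_comp_NCmapL, LinearMap.coe_comp] at hcomp
  exact hcomp.of_comp

theorem FlatModule.of_injective_of_isGorensteinFlat {M : Type u} [AddCommGroup M] [Module R M]
    (hinj : Module.Injective R M) (hG : IsGorensteinFlat R M) : FlatModule R M := by
  obtain ⟨c⟩ := hG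
  obtain ⟨e⟩ := c.iso
  let i : M →ₗ[R] c.F (-1) := (LinearMap.range (c.d (-1))).subtype ∘ₗ e.toLinearMap
  obtain ⟨p, hp⟩ := hinj.out i (Subtype.val_injective.comp e.injective) LinearMap.id
  exact (c.flat (-1)).of_retract i p (LinearMap.ext hp)

end Flat

section Characters

open NCTensor

abbrev QZmod : Type := AddCircle (1 : ℚ)

variable {R : Type u} [Ring R]

def CharR (R : Type u) [Ring R] (M : Type u) [AddCommGroup M] [Module R M] : Type u :=
  M →+ QZmod

namespace CharR

variable {M : Type u} [AddCommGroup M] [Module R M]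

instance : AddCommGroup (CharR R M) := inferInstanceAs (AddCommGroup (M →+ QZmod))
instance : FunLike (CharR R M) M QZmod := inferInstanceAs (FunLike (M →+ QZmod) M QZmod)
instance : AddMonoidHomClass (CharR R M) M QZmod :=
  inferInstanceAs (AddMonoidHomClass (M →+ QZmod) M QZmod)

@[ext] theorem ext {ξ ζ : CharR R M} (h : ∀ m, ξ m = ζ m) : ξ = ζ := DFunLike.ext _ _ h

instance : SMul Rᵐᵒᵖ (CharR R M) :=
  ⟨fun s ξ => (show M →+ QZmod from ξ).comp (DistribSMul.toAddMonoidHom M s.unop)⟩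

@[simp] theorem smul_apply (s : Rᵐᵒᵖ) (ξ : CharR R M) (m : M) : (s • ξ) m = ξ (s.unop • m) := rfl
@[simp] theorem add_apply (ξ ζ : CharR R M) (m : M) : (ξ + ζ) m = ξ m + ζ m := rfl
@[simp] theorem zero_apply (m : M) : (0 : CharR R M) m = 0 := rfl

instance : Module Rᵐᵒᵖ (CharR R M) where
  one_smul ξ := by ext m; simp
  mul_smul s t ξ := by ext m; simp [mul_smul]
  smul_zero s := by ext m; simp
  smul_add s ξ ζ := by ext m; simp
  add_smul s t ξ := by ext m; simp [add_smul]
  zero_smul ξ := by ext m; simp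

variable {A B C : Type u} [AddCommGroup A] [Module R A] [AddCommGroup B] [Module R B]
  [AddCommGroup C] [Module R C]

def dual (g : A →ₗ[R] B) : CharR R B →ₗ[Rᵐᵒᵖ] CharR R A where
  toFun ξ := (show B →+ QZmod from ξ).comp g.toAddMonoidHom
  map_add' _ _ := rfl
  map_smul' s ξ := by ext a; exact (congrArg ξ (g.map_smul s.unop a)).symm

@[simp] theorem dual_apply (g : A →ₗ[R] B) (ξ : CharR R B) (a : A) : dual g ξ a = ξ (g a) := rfl

theorem dual_comp (h : B →ₗ[R] C) (g : A →ₗ[R] B) : dual (h ∘ₗ g) = dual g ∘ₗ dual h := rfl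

theorem dual_injective_of_surjective {g : A →ₗ[R] B} (hg : Function.Surjective g) :
    Function.Injective (dual g) :=
  CharacterModule.dual_injective_of_surjective g.toAddMonoidHom.toIntLinearMap hg

theorem dual_surjective_of_injective {g : A →ₗ[R] B} (hg : Function.Injective g) :
    Function.Surjective (dual g) :=
  CharacterModule.dual_surjective_of_injective g.toAddMonoidHom.toIntLinearMap hg

theorem exact_dual {g : A →ₗ[R] B} {h : B →ₗ[R] C} (hgh : Function.Exact g h)
    (hh : Function.Surjective h) : Function.Exact (dual h) (dual g) := by
  intro ξ
  refine ⟨fun hξ => ?_, ?_⟩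
  · refine ⟨h.toAddMonoidHom.liftOfSurjective hh ⟨show B →+ QZmod from ξ, fun b hb => ?_⟩, ?_⟩
    · obtain ⟨a, rfl⟩ := (hgh b).1 hb
      exact DFunLike.congr_fun hξ a
    · ext b
      exact AddMonoidHom.liftOfRightInverse_comp_apply _ _ (Function.rightInverse_surjInv hh) _ b
  · rintro ⟨η, rfl⟩
    ext a
    simp [hgh.apply_apply_eq_zero]

end CharR

end Characters

section Adjunction

open NCTensor

variable {R : Type u} [Ring R] {Y M : Type u} [AddCommGroup Y] [Module Rᵐᵒᵖ Y]
  [AddCommGroup M] [Module R M]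

noncomputable def charTensorEquiv :
    CharacterModule (NCTensor R Y M) ≃ (Y →ₗ[Rᵐᵒᵖ] CharR R M) where
  toFun χ :=
    { toFun y := show M →+ QZmod from
        AddMonoidHom.mk' (fun m => χ (mk R y m)) fun m m' => by rw [mk_add_right, map_add]
      map_add' y y' := by ext m; exact (congrArg χ (mk_add_left y y' m)).trans (map_add χ _ _)
      map_smul' s y := by
        ext m
        show χ (mk R (s • y) m) = χ (mk R y (s.unop • m))
        rw [← mk_op_smul, op_unop] }
  invFun g :=
    (Submodule.liftQ (NCRel R Y M)
      (TensorProduct.liftAddHom (show Y →+ M →+ QZmod from g.toAddMonoidHom)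
        fun z y m => by
          show g (z • y) m = g y (z • m)
          rw [map_zsmul, map_zsmul]
          rfl).toIntLinearMap
      (by
        rw [NCRel, Submodule.span_le]
        rintro t ⟨y, r, m, rfl⟩
        rw [SetLike.mem_coe, LinearMap.mem_ker, map_sub, sub_eq_zero]
        show g (op r • y) m = g y (r • m)
        rw [map_smul]
        rfl)).toAddMonoidHom
  left_inv χ := addHom_ext fun _ _ => rfl
  right_inv g := rfl

theorem charTensorEquiv_dual_NCmap {M' : Type u} [AddCommGroup M'] [Module R M']
    (g : M →ₗ[R] M') (χ : CharacterModule (NCTensor R Y M')) :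
    charTensorEquiv (CharacterModule.dual (NCmap R Y g) χ) = CharR.dual g ∘ₗ charTensorEquiv χ :=
  rfl

theorem charTensorEquiv_dual_NCmapL {Y' : Type u} [AddCommGroup Y'] [Module Rᵐᵒᵖ Y']
    (j : Y →ₗ[Rᵐᵒᵖ] Y') (χ : CharacterModule (NCTensor R Y' M)) :
    charTensorEquiv (CharacterModule.dual (NCmapL R M j) χ) = charTensorEquiv χ ∘ₗ j :=
  rfl

end Adjunction

section Lifting

universe v

theorem exists_section_of_exact_of_injective {S : Type*} [Ring S] {A B : Type v} {C : Type*}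
    [AddCommGroup A] [Module S A] [AddCommGroup B] [Module S B] [AddCommGroup C] [Module S C]
    [Module.Injective S A] {i : A →ₗ[S] B} {p : B →ₗ[S] C} (hip : Function.Exact i p)
    (hi : Function.Injective i) (hp : Function.Surjective p) :
    ∃ s : C →ₗ[S] B, p ∘ₗ s = LinearMap.id := by
  obtain ⟨r, hr⟩ := Module.Injective.out i hi LinearMap.id
  have hsplit := (hip.split_tfae hi hp).out 0 1
  exact hsplit.2 ⟨r, LinearMap.ext hr⟩

theorem exists_comp_eq_of_exact {S : Type*} [Ring S] {A B C X : Type*} [AddCommGroup A]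
    [Module S A] [AddCommGroup B] [Module S B] [AddCommGroup C] [Module S C] [AddCommGroup X]
    [Module S X] {i : A →ₗ[S] B} {p : B →ₗ[S] C} (hip : Function.Exact i p)
    (hi : Function.Injective i) (g : X →ₗ[S] B) (hg : p ∘ₗ g = 0) :
    ∃ h : X →ₗ[S] A, i ∘ₗ h = g := by
  have hrange (x : X) : g x ∈ LinearMap.range i :=
    (hip (g x)).1 (LinearMap.congr_fun hg x)
  refine ⟨(LinearEquiv.ofInjective i hi).symm ∘ₗ g.codRestrict _ hrange, LinearMap.ext fun x => ?_⟩
  exact congrArg Subtype.val ((LinearEquiv.ofInjective i hi).apply_symm_apply ⟨g x, hrange x⟩)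

open NCTensor

variable {R : Type u} [Ring R] {I : Type u} [AddCommGroup I] [Module Rᵐᵒᵖ I]

theorem NCmap_injective_iff_forall_lift {X Y : Type u} [AddCommGroup X] [Module R X]
    [AddCommGroup Y] [Module R Y] (g : X →ₗ[R] Y) :
    Function.Injective (NCmap R I g) ↔
      ∀ φ : I →ₗ[Rᵐᵒᵖ] CharR R X, ∃ ψ : I →ₗ[Rᵐᵒᵖ] CharR R Y, CharR.dual g ∘ₗ ψ = φ := by
  rw [← CharacterModule.dual_surjective_iff_injective]
  constructor
  · intro h φ
    obtain ⟨χ, hχ⟩ := h (charTensorEquiv.symm φ)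
    exact ⟨charTensorEquiv χ, by rw [← charTensorEquiv_dual_NCmap, hχ, Equiv.apply_symm_apply]⟩
  · intro h χ
    obtain ⟨ψ, hψ⟩ := h (charTensorEquiv χ)
    refine ⟨charTensorEquiv.symm ψ, charTensorEquiv.injective ?_⟩
    rw [charTensorEquiv_dual_NCmap, Equiv.apply_symm_apply, hψ]

theorem FlatModule.injective_charR {F : Type u} [AddCommGroup F] [Module R F]
    (hF : FlatModule R F) : Module.Injective Rᵐᵒᵖ (CharR R F) := by
  refine ⟨fun X Y _ _ _ _ j hj φ => ?_⟩
  obtain ⟨χ, hχ⟩ :=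
    CharacterModule.dual_surjective_of_injective _ (hF X Y j hj) (charTensorEquiv.symm φ)
  refine ⟨charTensorEquiv χ, fun x => ?_⟩
  rw [← LinearMap.comp_apply, ← charTensorEquiv_dual_NCmapL, hχ, Equiv.apply_symm_apply]

theorem exists_dual_comp_eq_of_exact_of_flat {N D F : Type u} [AddCommGroup N] [Module R N]
    [AddCommGroup D] [Module R D] [AddCommGroup F] [Module R F] {ν : N →ₗ[R] D}
    {α : D →ₗ[R] F} (hν : Function.Injective ν) (hνα : Function.Exact ν α)
    (hα : Function.Surjective α) (hF : FlatModule R F) (φ : I →ₗ[Rᵐᵒᵖ] CharR R N) :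
    ∃ l : I →ₗ[Rᵐᵒᵖ] CharR R D, CharR.dual ν ∘ₗ l = φ := by
  have := hF.injective_charR
  obtain ⟨s, hs⟩ := exists_section_of_exact_of_injective (CharR.exact_dual hνα hα)
    (CharR.dual_injective_of_surjective hα) (CharR.dual_surjective_of_injective hν)
  exact ⟨s ∘ₗ φ, by rw [← LinearMap.comp_assoc, hs, LinearMap.id_comp]⟩

end Lifting

section Presentation

open NCTensor

variable {R : Type u} [Ring R] {I : Type u} [AddCommGroup I] [Module Rᵐᵒᵖ I]
  {N N' K F D : Type u} [AddCommGroup N] [Module R N] [AddCommGroup N'] [Module R N']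
  [AddCommGroup K] [Module R K] [AddCommGroup F] [Module R F] [AddCommGroup D] [Module R D]

theorem NCmap_injective_of_pullback_square {ν : N →ₗ[R] D} {α : D →ₗ[R] F} {κ : K →ₗ[R] D}
    {β : D →ₗ[R] N'} {f : N →ₗ[R] N'} {ι : K →ₗ[R] F} (hν : Function.Injective ν)
    (hνα : Function.Exact ν α) (hα : Function.Surjective α) (hκβ : Function.Exact κ β)
    (hβ : Function.Surjective β) (hβν : β ∘ₗ ν = f) (hακ : α ∘ₗ κ = ι) (hF : FlatModule R F)
    (hι : Function.Injective (NCmap R I ι)) : Function.Injective (NCmap R I f) := by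
  rw [NCmap_injective_iff_forall_lift]
  intro φ
  obtain ⟨l, hl⟩ := exists_dual_comp_eq_of_exact_of_flat hν hνα hα hF φ
  obtain ⟨θ, hθ⟩ := (NCmap_injective_iff_forall_lift ι).1 hι (CharR.dual κ ∘ₗ l)
  -- `l - α⁺ θ` vanishes on `κ K = ker β`, so it descends to `N'`.
  obtain ⟨ψ, hψ⟩ := exists_comp_eq_of_exact (CharR.exact_dual hκβ hβ)
    (CharR.dual_injective_of_surjective hβ) (l - CharR.dual α ∘ₗ θ) (by
      rw [LinearMap.comp_sub, ← LinearMap.comp_assoc, ← CharR.dual_comp, hακ]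
      exact sub_eq_zero.2 hθ.symm)
  refine ⟨ψ, ?_⟩
  calc CharR.dual f ∘ₗ ψ = CharR.dual ν ∘ₗ (CharR.dual β ∘ₗ ψ) := by rw [← hβν]; rfl
    _ = CharR.dual ν ∘ₗ l - CharR.dual (α ∘ₗ ν) ∘ₗ θ := by
      rw [hψ, LinearMap.comp_sub]
      rfl
    _ = φ := by
      rw [hνα.linearMap_comp_eq_zero, hl, sub_eq_self]
      ext ξ n
      simp

theorem NCmap_injective_of_flat_presentation {C : Type u} [AddCommGroup C] [Module R C]
    {f : N →ₗ[R] N'} {q : N' →ₗ[R] C} (hf : Function.Injective f) (hfq : Function.Exact f q)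
    (hq : Function.Surjective q) {ι : K →ₗ[R] F} {π : F →ₗ[R] C} (hιπ : Function.Exact ι π)
    (hπ : Function.Surjective π) (hF : FlatModule R F) (hι : Function.Injective (NCmap R I ι)) :
    Function.Injective (NCmap R I f) := by
  let P := LinearMap.eqLocus (q ∘ₗ LinearMap.fst R N' F) (π ∘ₗ LinearMap.snd R N' F)
  let ν : N →ₗ[R] P := (f.prod 0).codRestrict P fun n => by simp [P, hfq.apply_apply_eq_zero]
  let κ : K →ₗ[R] P :=
    ((0 : K →ₗ[R] N').prod ι).codRestrict P fun k => by simp [P, hιπ.apply_apply_eq_zero]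
  refine NCmap_injective_of_pullback_square (ν := ν) (α := LinearMap.snd R N' F ∘ₗ P.subtype)
    (κ := κ) (β := LinearMap.fst R N' F ∘ₗ P.subtype)
    (fun a b h => hf (congrArg (fun d : P => d.1.1) h)) ?_ (fun x => ?_) ?_ (fun n' => ?_)
    rfl rfl hF hι
  · rintro ⟨⟨n', x⟩, hd⟩
    refine ⟨fun (hx : x = 0) => ?_, ?_⟩
    · subst hx
      obtain ⟨n, hn⟩ := (hfq n').1 (by simpa [P] using hd)
      exact ⟨n, Subtype.ext (Prod.ext hn rfl)⟩
    · rintro ⟨n, hn⟩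
      rw [← hn]
      rfl
  · obtain ⟨n', hn'⟩ := hq (π x)
    exact ⟨⟨(n', x), hn'⟩, rfl⟩
  · rintro ⟨⟨n', x⟩, hd⟩
    refine ⟨fun (hn' : n' = 0) => ?_, ?_⟩
    · subst hn'
      obtain ⟨k, hk⟩ := (hιπ x).1 (by simpa [P] using hd.symm)
      exact ⟨k, Subtype.ext (Prod.ext rfl hk)⟩
    · rintro ⟨k, hk⟩
      rw [← hk]
      rfl
  · obtain ⟨x, hx⟩ := hπ (q n')
    exact ⟨⟨(n', x), hx.symm⟩, rfl⟩

end Presentation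

section Gorenstein

open NCTensor

variable {R : Type u} [Ring R] {I : Type u} [AddCommGroup I] [Module Rᵐᵒᵖ I]

theorem NCmap_range_subtype_injective {U V B : Type u} [AddCommGroup U] [Module R U]
    [AddCommGroup V] [Module R V] [AddCommGroup B] [Module R B] {g₁ : U →ₗ[R] V}
    {g : V →ₗ[R] B} (hg : g ∘ₗ g₁ = 0) (hexact : Function.Exact (NCmap R I g₁) (NCmap R I g)) :
    Function.Injective (NCmap R I (LinearMap.range g).subtype) := by
  rw [injective_iff_map_eq_zero]
  intro x hx
  obtain ⟨y, rfl⟩ := NCmap_surjective g.surjective_rangeRestrict x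
  rw [← LinearMap.comp_apply, ← NCmap_comp, LinearMap.subtype_comp_codRestrict] at hx
  obtain ⟨w, rfl⟩ := (hexact y).1 hx
  have hg' : g.rangeRestrict ∘ₗ g₁ = 0 :=
    LinearMap.ext fun u => Subtype.ext (LinearMap.congr_fun hg u)
  rw [← LinearMap.comp_apply, ← NCmap_comp, hg', NCmap_zero, LinearMap.zero_apply]

theorem NCmap_injective_of_isGorensteinFlat {N N' C : Type u} [AddCommGroup N] [Module R N]
    [AddCommGroup N'] [Module R N'] [AddCommGroup C] [Module R C] {f : N →ₗ[R] N'}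
    {q : N' →ₗ[R] C} (hf : Function.Injective f) (hfq : Function.Exact f q)
    (hq : Function.Surjective q) (hC : IsGorensteinFlat R C) (hI : Module.Injective Rᵐᵒᵖ I) :
    Function.Injective (NCmap R I f) := by
  obtain ⟨c⟩ := hC
  obtain ⟨e⟩ := c.iso
  refine NCmap_injective_of_flat_presentation hf hfq hq
    (ι := (LinearMap.range (c.d (-1 + 1))).subtype)
    (π := e.symm.toLinearMap ∘ₗ (c.d (-1)).rangeRestrict) ?_
    (e.symm.surjective.comp (c.d (-1)).surjective_rangeRestrict) (c.flat (-1 + 1))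
    (NCmap_range_subtype_injective (c.exact (-1 + 1)).linearMap_comp_eq_zero
      (c.tensorExact I hI (-1 + 1)))
  rw [LinearMap.exact_iff, LinearEquiv.ker_comp, LinearMap.ker_rangeRestrict,
    Submodule.range_subtype, (c.exact (-1)).linearMap_ker_eq]

theorem NCmap_injective_of_forall_isGorensteinFlat
    (h : ∀ M : ModuleCat.{u} R, IsGorensteinFlat R M) (hI : Module.Injective Rᵐᵒᵖ I)
    {N N' : Type u} [AddCommGroup N] [Module R N] [AddCommGroup N'] [Module R N']
    {f : N →ₗ[R] N'} (hf : Function.Injective f) : Function.Injective (NCmap R I f) :=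
  NCmap_injective_of_isGorensteinFlat hf (LinearMap.exact_map_mkQ_range f)
    (Submodule.mkQ_surjective _) (h (ModuleCat.of R (N' ⧸ LinearMap.range f))) hI

end Gorenstein

section Opposite

open NCTensor

variable {R : Type u} [Ring R] {I : Type u} [AddCommGroup I] [Module Rᵐᵒᵖ I]

noncomputable def NCTensor.commEquiv {N : Type u} [AddCommGroup N] [Module Rᵐᵒᵖᵐᵒᵖ N]
    [Module R N] (hN : ∀ (r : R) (n : N), op (op r) • n = r • n) :
    NCTensor Rᵐᵒᵖ N I ≃ₗ[ℤ] NCTensor R I N :=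
  Submodule.Quotient.equiv _ _ (TensorProduct.comm ℤ N I) <| by
    rw [NCRel, NCRel, Submodule.map_span]
    conv_rhs => rw [← Submodule.span_neg]
    congr 1
    ext t
    simp only [Set.mem_image, Set.mem_neg, Set.mem_ofPred_eq]
    constructor
    · rintro ⟨_, ⟨n, r, i, rfl⟩, rfl⟩
      refine ⟨i, r.unop, n, ?_⟩
      simp only [map_sub, neg_sub]
      erw [TensorProduct.comm_tmul, TensorProduct.comm_tmul]
      rw [← hN, op_unop]
    · rintro ⟨i, r, n, ht⟩
      refine ⟨_, ⟨n, op r, i, rfl⟩, ?_⟩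
      rw [← neg_neg t, ht, neg_sub, map_sub]
      erw [TensorProduct.comm_tmul, TensorProduct.comm_tmul]
      rw [hN]

theorem FlatModule.op_of_forall_NCmap_injective
    (hI : ∀ (N N' : Type u) [AddCommGroup N] [Module R N] [AddCommGroup N'] [Module R N']
      (f : N →ₗ[R] N'), Function.Injective f → Function.Injective (NCmap R I f)) :
    FlatModule Rᵐᵒᵖ I := by
  intro N N' _ _ _ _ f hf
  let _ : Module R N := Module.compHom N (RingEquiv.opOp R).toRingHom
  let _ : Module R N' := Module.compHom N' (RingEquiv.opOp R).toRingHom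
  let f' : N →ₗ[R] N' := { f.toAddMonoidHom with map_smul' := fun r => f.map_smul (op (op r)) }
  let e : NCTensor Rᵐᵒᵖ N I ≃ₗ[ℤ] NCTensor R I N := commEquiv fun _ _ => rfl
  let e' : NCTensor Rᵐᵒᵖ N' I ≃ₗ[ℤ] NCTensor R I N' := commEquiv fun _ _ => rfl
  have hcomm : e'.toLinearMap ∘ₗ NCmapL Rᵐᵒᵖ I f = NCmap R I f' ∘ₗ e.toLinearMap :=
    LinearMap.toAddMonoidHom_injective (addHom_ext fun _ _ => rfl)
  have hinj : Function.Injective (e'.toLinearMap ∘ₗ NCmapL Rᵐᵒᵖ I f) := by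
    rw [hcomm, LinearMap.coe_comp]
    exact (hI N N' f' hf).comp e.injective
  rw [LinearMap.coe_comp] at hinj
  exact hinj.of_comp

end Opposite

/-- If every left `R`-module is Gorenstein flat (i.e. `l.wGgldim R = 0`), then every
injective right `R`-module is flat and every injective left `R`-module is flat, i.e.
`R` is an IF ring. (Right `R`-modules are regarded as left `Rᵐᵒᵖ`-modules.) -/
theorem stmt0 (R : Type u) [Ring R]
    (h : ∀ M : ModuleCat.{u} R, IsGorensteinFlat R ↥M) :
    (∀ I : ModuleCat.{u} Rᵐᵒᵖ, Module.Injective Rᵐᵒᵖ ↥I → FlatModule Rᵐᵒᵖ ↥I) ∧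
    (∀ I : ModuleCat.{u} R, Module.Injective R ↥I → FlatModule R ↥I) :=
  ⟨fun _ hI => FlatModule.op_of_forall_NCmap_injective fun _ _ _ _ _ _ _ hf =>
      NCmap_injective_of_forall_isGorensteinFlat h hI hf,
    fun I hI => FlatModule.of_injective_of_isGorensteinFlat hI (h I)⟩
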